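/- arXiv:2406.08448 — 2 statements merged into one kernel-verified Lean document; each statement's English description precedes it below -/
import Mathlib

section
/- Define b_2(v) = (π β_ξ(v)(σ_s² + c²v) β_s + (1-π) β_s σ_s² β_ξ(v)) / (π β_ξ(v)(σ_s² + c²v) + (1-π) β_s σ_s²) where β_ξ(v) = σ_D²/(σ_D² + σ_s² + c²v), β_s = σ_D²/(σ_D² + σ_s²), parameters σ_D², σ_s², c² > 0 and 0 < π < 1. Then b_2 is strictly decreasing in the supply variance v > 0. -/
/-!
Both the numerator and the denominator of `b₂` carry the common factor `βξ(v) βs`; cancelling it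
leaves a linear fractional function `σD²(σs² + π c² v) / (σs²(σD² + σs²) + c²(σs² + π σD²) v)`
of `v`. Such a map `(a + b v) / (c + d v)` is decreasing where its denominator is positive as soon
as `b c < a d`, and here `b c - a d = σD² c² σs⁴ (π - 1) < 0`.
-/

open Set

theorem strictAntiOn_linear_div_linear {a b c d : ℝ} {s : Set ℝ}
    (hden : ∀ v ∈ s, 0 < c + d * v) (hdet : b * c < a * d) :
    StrictAntiOn (fun v => (a + b * v) / (c + d * v)) s := by
  intro x hx y hy hxy
  rw [div_lt_div_iff₀ (hden y hy) (hden x hx)]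
  have key : (a + b * x) * (c + d * y) - (a + b * y) * (c + d * x) = (a * d - b * c) * (y - x) := by
    ring
  nlinarith [mul_pos (sub_pos.2 hdet) (sub_pos.2 hxy)]

section PriceImpact

variable {σD2 σs2 c2 π v : ℝ}

theorem priceImpact_denom_eq (hT : σD2 + σs2 + c2 * v ≠ 0) (hDS : σD2 + σs2 ≠ 0)
    (hσD2 : σD2 ≠ 0) :
    π * (σD2 / (σD2 + σs2 + c2 * v)) * (σs2 + c2 * v) + (1 - π) * (σD2 / (σD2 + σs2)) * σs2
      = σD2 / (σD2 + σs2 + c2 * v) * (σD2 / (σD2 + σs2))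
        * ((σs2 * (σD2 + σs2) + c2 * (σs2 + π * σD2) * v) / σD2) := by
  field_simp
  ring

theorem priceImpact_eq_linear_div_linear (hT : σD2 + σs2 + c2 * v ≠ 0) (hDS : σD2 + σs2 ≠ 0)
    (hσD2 : σD2 ≠ 0) :
    (π * (σD2 / (σD2 + σs2 + c2 * v)) * (σs2 + c2 * v) * (σD2 / (σD2 + σs2))
        + (1 - π) * (σD2 / (σD2 + σs2)) * σs2 * (σD2 / (σD2 + σs2 + c2 * v)))
      / (π * (σD2 / (σD2 + σs2 + c2 * v)) * (σs2 + c2 * v)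
        + (1 - π) * (σD2 / (σD2 + σs2)) * σs2)
      = (σD2 * σs2 + σD2 * π * c2 * v)
        / (σs2 * (σD2 + σs2) + c2 * (σs2 + π * σD2) * v) := by
  have hβ : σD2 / (σD2 + σs2 + c2 * v) * (σD2 / (σD2 + σs2)) ≠ 0 := by
    simp [hT, hDS, hσD2]
  have hnum : ∀ p q : ℝ, π * p * (σs2 + c2 * v) * q + (1 - π) * q * σs2 * p
      = p * q * (σs2 + π * c2 * v) := fun p q => by ring
  rw [priceImpact_denom_eq hT hDS hσD2, hnum, mul_div_mul_left _ _ hβ, div_div_eq_mul_div]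
  ring

end PriceImpact

/-- The second-period price impact coefficient `b₂(v)` is strictly decreasing
in the (perceived) supply variance `v > 0`. -/
theorem b2_strictAnti_in_supply_variance (σD2 σs2 c2 π : ℝ)
    (hσD2 : 0 < σD2) (hσs2 : 0 < σs2) (hc2 : 0 < c2) (hπ0 : 0 < π) (hπ1 : π < 1)
    (βs : ℝ) (hβs : βs = σD2 / (σD2 + σs2))
    (βξ : ℝ → ℝ) (hβξ : ∀ v, βξ v = σD2 / (σD2 + σs2 + c2 * v))
    (b2 : ℝ → ℝ)
    (hb2 : ∀ v, b2 v = (π * βξ v * (σs2 + c2 * v) * βs + (1 - π) * βs * σs2 * βξ v)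
      / (π * βξ v * (σs2 + c2 * v) + (1 - π) * βs * σs2)) :
    StrictAntiOn b2 (Set.Ioi (0 : ℝ)) := by
  have hden : ∀ v ∈ Ioi (0 : ℝ), 0 < σs2 * (σD2 + σs2) + c2 * (σs2 + π * σD2) * v :=
    fun v hv => by have : 0 < v := hv; positivity
  have hdet : σD2 * π * c2 * (σs2 * (σD2 + σs2)) < σD2 * σs2 * (c2 * (σs2 + π * σD2)) := by
    nlinarith [mul_pos (mul_pos hσD2 hc2) (mul_pos (mul_pos hσs2 hσs2) (sub_pos.2 hπ1))]
  refine (strictAntiOn_linear_div_linear hden hdet).congr fun v hv => ?_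
  have hv : 0 < v := hv
  have hT : σD2 + σs2 + c2 * v ≠ 0 := by positivity
  have hDS : σD2 + σs2 ≠ 0 := by positivity
  rw [hb2, hβξ, hβs, priceImpact_eq_linear_div_linear hT hDS hσD2.ne']
end

section
/- Let b_2 and b_2* be defined by the same formula b(v) = (π β_ξ(v)(σ_s² + c²v) β_s + (1-π) β_s σ_s² β_ξ(v)) / (π β_ξ(v)(σ_s² + c²v) + (1-π) β_s σ_s²) with β_ξ(v) = σ_D²/(σ_D² + σ_s² + c²v), evaluated at v = σ_θ,2² and v = σ_θ,1² respectively, where σ_θ,1² > σ_θ,2² > 0. Then b_2* < b_2. -/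
/-!
Numerator and denominator of `b v` share the factor `βs * βξ v / σD2`; cancelling it leaves
the linear fractional function
`b v = σD2 * (σs2 + π * c2 * v) / ((σD2 + σs2) * σs2 + (σs2 + π * σD2) * c2 * v)`,
which is strictly decreasing on `v ≥ 0` because its determinant has the sign of `π - 1 < 0`.
-/

theorem mobius_lt_mobius {a b c d x y : ℝ} (hx : 0 < c + d * x) (hy : 0 < c + d * y)
    (hdet : b * c < a * d) (hxy : x < y) :
    (a + b * y) / (c + d * y) < (a + b * x) / (c + d * x) := by
  rw [div_lt_div_iff₀ hy hx]
  nlinarith [mul_pos (sub_pos.2 hdet) (sub_pos.2 hxy)]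

theorem signal_coeff_eq_mobius {σD2 σs2 c2 π v βs βξ : ℝ} (hσD2 : 0 < σD2) (hσs2 : 0 ≤ σs2)
    (hc2 : 0 ≤ c2) (hv : 0 ≤ v)
    (hβs : βs = σD2 / (σD2 + σs2)) (hβξ : βξ = σD2 / (σD2 + σs2 + c2 * v)) :
    (π * βξ * (σs2 + c2 * v) * βs + (1 - π) * βs * σs2 * βξ)
        / (π * βξ * (σs2 + c2 * v) + (1 - π) * βs * σs2)
      = (σD2 * σs2 + σD2 * π * c2 * v) / ((σD2 + σs2) * σs2 + (σs2 + π * σD2) * c2 * v) := by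
  have hden : π * βξ * (σs2 + c2 * v) + (1 - π) * βs * σs2
      = βs * βξ * ((σD2 + σs2) * σs2 + (σs2 + π * σD2) * c2 * v) / σD2 := by
    subst hβs hβξ; field_simp; ring
  have hnum : π * βξ * (σs2 + c2 * v) * βs + (1 - π) * βs * σs2 * βξ
      = βs * βξ * (σD2 * σs2 + σD2 * π * c2 * v) / σD2 := by
    field_simp; ring
  have hβ : 0 < βs * βξ := by subst hβs hβξ; positivity
  rw [hnum, hden, div_div_div_cancel_right₀ hσD2.ne', mul_div_mul_left _ _ hβ.ne']

/-- The informed investors' perceived second-period coefficient `b₂* = b(σθ,1²)`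
(computed under their incorrectly larger supply variance `σθ,1² > σθ,2²`) is strictly smaller
than the true coefficient `b₂ = b(σθ,2²)`. -/
theorem perceived_coefficient_lt_true (σD2 σs2 c2 π σθ1sq σθ2sq : ℝ)
    (hσD2 : 0 < σD2) (hσs2 : 0 < σs2) (hc2 : 0 < c2) (hπ0 : 0 < π) (hπ1 : π < 1)
    (hσθ2 : 0 < σθ2sq) (hσθ12 : σθ2sq < σθ1sq)
    (βs : ℝ) (hβs : βs = σD2 / (σD2 + σs2))
    (βξ : ℝ → ℝ) (hβξ : ∀ v, βξ v = σD2 / (σD2 + σs2 + c2 * v))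
    (b : ℝ → ℝ)
    (hb : ∀ v, b v = (π * βξ v * (σs2 + c2 * v) * βs + (1 - π) * βs * σs2 * βξ v)
      / (π * βξ v * (σs2 + c2 * v) + (1 - π) * βs * σs2))
    (b2 b2star : ℝ) (hb2 : b2 = b σθ2sq) (hb2star : b2star = b σθ1sq) :
    b2star < b2 := by
  have hmobius : ∀ v, 0 ≤ v → b v
      = (σD2 * σs2 + σD2 * π * c2 * v) / ((σD2 + σs2) * σs2 + (σs2 + π * σD2) * c2 * v) :=
    fun v hv => (hb v).trans <|
      signal_coeff_eq_mobius hσD2 hσs2.le hc2.le hv hβs (hβξ v)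
  have hσθ1 : 0 < σθ1sq := hσθ2.trans hσθ12
  rw [hb2, hb2star, hmobius _ hσθ2.le, hmobius _ hσθ1.le]
  refine mobius_lt_mobius (by positivity) (by positivity) ?_ hσθ12
  -- the determinant condition reduces to `π * σs2 < σs2`
  nlinarith [mul_pos (mul_pos (mul_pos hσD2 hσs2) hc2) (mul_pos hσs2 (sub_pos.2 hπ1))]
end
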